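/- The second q-exponential polynomial Φ_n(x) = sum_{k=0}^n q^{C(k,2)}·S[n,k]·x^k satisfies Φ_n(x) = (1-q)^{-n} · sum_{i=0}^n C(n,i)·(-1)^i·((1-q)x; q)_i, where (a;q)_i = product_{j=0}^{i-1}(1-q^j·a). -/
import Mathlib


open Finset Matrix

/-- The q-integer `[n] = 1 + q + ... + q^(n-1)`. -/
def qint {R : Type*} [CommRing R] (q : R) (n : ℕ) : R := ∑ i ∈ Finset.range n, q ^ i

/-- The q-factorial `[n]! = [1][2]⋯[n]`. -/
def qfact {R : Type*} [CommRing R] (q : R) (n : ℕ) : R := ∏ i ∈ Finset.range n, qint q (i + 1)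

/-- The Gaussian binomial coefficient, via the q-Pascal recurrence. -/
def qbinom {R : Type*} [CommRing R] (q : R) : ℕ → ℕ → R
  | 0, 0 => 1
  | 0, _ + 1 => 0
  | _ + 1, 0 => 1
  | n + 1, k + 1 => qbinom q n k + q ^ (k + 1) * qbinom q n (k + 1)

/-- The q-Stirling numbers of the second kind:
`S[n,k] = S[n-1,k-1] + [k]·S[n-1,k]`, `S[0,k] = δ_{k0}`, `S[n,0] = δ_{n0}`. -/
def qStirling2 {R : Type*} [CommRing R] (q : R) : ℕ → ℕ → R
  | 0, 0 => 1
  | 0, _ + 1 => 0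
  | _ + 1, 0 => 0
  | n + 1, k + 1 => qStirling2 q n k + qint q (k + 1) * qStirling2 q n (k + 1)

/-- The q-Pochhammer symbol `(a;q)_m = ∏_{j<m} (1 - q^j a)`. -/
def qpoch {R : Type*} [CommRing R] (q a : R) (m : ℕ) : R := ∏ j ∈ Finset.range m, (1 - q ^ j * a)

lemma qStirling2_eq_zero {R : Type*} [CommRing R] (q : R) :
    ∀ n k : ℕ, n < k → qStirling2 q n k = 0
  | 0, _ + 1, _ => rfl
  | n + 1, k + 1, h => by
    show qStirling2 q n k + qint q (k + 1) * qStirling2 q n (k + 1) = 0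
    rw [qStirling2_eq_zero q n k (by omega), qStirling2_eq_zero q n (k + 1) (by omega)]
    ring

lemma one_sub_mul_qint {R : Type*} [CommRing R] (q : R) (k : ℕ) :
    (1 - q) * qint q k = 1 - q ^ k := by
  unfold qint
  induction k with
  | zero => simp
  | succ k ih => rw [Finset.sum_range_succ, mul_add, ih]; ring

lemma qpoch_succ {R : Type*} [CommRing R] (q a : R) (m : ℕ) :
    qpoch q a (m + 1) = (1 - a) * qpoch q (q * a) m := by
  unfold qpoch
  rw [Finset.prod_range_succ', pow_zero, one_mul, mul_comm]
  congr 1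
  refine Finset.prod_congr rfl fun j _ => ?_
  ring

lemma shift_sum' {R : Type*} [CommRing R] (u : ℕ → R) (n : ℕ) (hn : u (n + 1) = 0) :
    ∑ k ∈ Finset.range (n + 1), u k = (∑ k ∈ Finset.range (n + 1), u (k + 1)) + u 0 := by
  have h := Finset.sum_range_succ' u (n + 1)
  rw [Finset.sum_range_succ u (n + 1), hn, add_zero] at h
  exact h

lemma shift_sum {R : Type*} [CommRing R] (u : ℕ → R) (n : ℕ) (h0 : u 0 = 0)
    (hn : u (n + 1) = 0) :
    ∑ k ∈ Finset.range (n + 1), u (k + 1) = ∑ k ∈ Finset.range (n + 1), u k := by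
  rw [shift_sum' u n hn, h0, add_zero]

lemma phi_rec {F : Type*} [Field F] (q x : F) (n : ℕ) :
    (1 - q) * ∑ k ∈ range (n + 1 + 1), q ^ k.choose 2 * qStirling2 q (n + 1) k * x ^ k
      = (1 - q) * x * (∑ k ∈ range (n + 1), q ^ k.choose 2 * qStirling2 q n k * (q * x) ^ k)
        + (∑ k ∈ range (n + 1), q ^ k.choose 2 * qStirling2 q n k * x ^ k)
        - ∑ k ∈ range (n + 1), q ^ k.choose 2 * qStirling2 q n k * (q * x) ^ k := by
  have hsplit : ∑ k ∈ range (n + 1 + 1), q ^ k.choose 2 * qStirling2 q (n + 1) k * x ^ k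
      = ∑ k ∈ range (n + 1), q ^ (k + 1).choose 2 * qStirling2 q (n + 1) (k + 1) * x ^ (k + 1) := by
    rw [Finset.sum_range_succ']
    simp [qStirling2]
  rw [hsplit, Finset.mul_sum]
  have hterm : ∀ k ∈ range (n + 1),
      (1 - q) * (q ^ (k + 1).choose 2 * qStirling2 q (n + 1) (k + 1) * x ^ (k + 1))
        = (1 - q) * x * (q ^ k.choose 2 * qStirling2 q n k * (q * x) ^ k)
          + q ^ (k + 1).choose 2 * qStirling2 q n (k + 1) * (x ^ (k + 1) - (q * x) ^ (k + 1)) := by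
    intro k _
    have h1 : qStirling2 q (n + 1) (k + 1)
        = qStirling2 q n k + qint q (k + 1) * qStirling2 q n (k + 1) := rfl
    have h2 : (k + 1).choose 2 = k.choose 2 + k := by
      rw [Nat.choose_succ_succ, Nat.choose_one_right, Nat.add_comm]
    have h3 := one_sub_mul_qint q (k + 1)
    rw [h1, h2]
    linear_combination (q ^ k.choose 2 * q ^ k * qStirling2 q n (k + 1) * x ^ (k + 1)) * h3
  rw [Finset.sum_congr rfl hterm, Finset.sum_add_distrib, ← Finset.mul_sum]
  have hu : (∑ k ∈ range (n + 1),
        q ^ (k + 1).choose 2 * qStirling2 q n (k + 1) * (x ^ (k + 1) - (q * x) ^ (k + 1)))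
      = ∑ k ∈ range (n + 1), q ^ k.choose 2 * qStirling2 q n k * (x ^ k - (q * x) ^ k) :=
    shift_sum (fun k => q ^ k.choose 2 * qStirling2 q n k * (x ^ k - (q * x) ^ k)) n
      (by simp) (by simp [qStirling2_eq_zero q n (n + 1) n.lt_succ_self])
  rw [hu]
  have hsub : (∑ k ∈ range (n + 1), q ^ k.choose 2 * qStirling2 q n k * (x ^ k - (q * x) ^ k))
      = (∑ k ∈ range (n + 1), q ^ k.choose 2 * qStirling2 q n k * x ^ k)
        - ∑ k ∈ range (n + 1), q ^ k.choose 2 * qStirling2 q n k * (q * x) ^ k := by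
    rw [← Finset.sum_sub_distrib]
    exact Finset.sum_congr rfl fun k _ => by ring
  rw [hsub]
  ring

lemma A_rec {F : Type*} [Field F] (q a : F) (n : ℕ) :
    ∑ i ∈ range (n + 1 + 1), ((n + 1).choose i : F) * (-1 : F) ^ i * qpoch q a i
      = (∑ i ∈ range (n + 1), (n.choose i : F) * (-1 : F) ^ i * qpoch q a i)
        - (1 - a) * ∑ i ∈ range (n + 1), (n.choose i : F) * (-1 : F) ^ i * qpoch q (q * a) i := by
  rw [Finset.sum_range_succ']
  have hv : (∑ i ∈ range (n + 1), (n.choose i : F) * (-1 : F) ^ i * qpoch q a i)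
      = (∑ i ∈ range (n + 1), (n.choose (i + 1) : F) * (-1 : F) ^ (i + 1) * qpoch q a (i + 1))
        + (n.choose 0 : F) * (-1 : F) ^ 0 * qpoch q a 0 :=
    shift_sum' (fun i => (n.choose i : F) * (-1 : F) ^ i * qpoch q a i) n
      (by simp [Nat.choose_succ_self])
  have hw : (1 - a) * ∑ i ∈ range (n + 1), (n.choose i : F) * (-1 : F) ^ i * qpoch q (q * a) i
      = ∑ i ∈ range (n + 1), (n.choose i : F) * (-1 : F) ^ i * qpoch q a (i + 1) := by
    rw [Finset.mul_sum]
    refine Finset.sum_congr rfl fun i _ => ?_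
    rw [qpoch_succ]; ring
  have hsum : (∑ i ∈ range (n + 1), ((n.choose (i + 1) : F) * (-1 : F) ^ (i + 1) * qpoch q a (i + 1)
        - (n.choose i : F) * (-1 : F) ^ i * qpoch q a (i + 1)))
      = ∑ i ∈ range (n + 1), ((n + 1).choose (i + 1) : F) * (-1 : F) ^ (i + 1) * qpoch q a (i + 1) := by
    refine Finset.sum_congr rfl fun i _ => ?_
    have h : ((n + 1).choose (i + 1) : F) = (n.choose i : F) + (n.choose (i + 1) : F) := by
      rw [Nat.choose_succ_succ]; push_cast; ring
    rw [h]; ring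
  rw [Finset.sum_sub_distrib] at hsum
  simp only [Nat.choose_zero_right, Nat.cast_one, pow_zero] at hv ⊢
  linear_combination hw - hv - hsum

lemma key_identity {F : Type*} [Field F] (q : F) (n : ℕ) : ∀ x : F,
    (1 - q) ^ n * ∑ k ∈ range (n + 1), q ^ k.choose 2 * qStirling2 q n k * x ^ k
      = ∑ i ∈ range (n + 1), (n.choose i : F) * (-1 : F) ^ i * qpoch q ((1 - q) * x) i := by
  induction n with
  | zero => intro x; simp [qStirling2, qpoch]
  | succ n ih =>
    intro x
    have h1 := phi_rec q x n
    have h2 := A_rec q ((1 - q) * x) n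
    have hx := ih x
    have hqx := ih (q * x)
    have harg : q * ((1 - q) * x) = (1 - q) * (q * x) := by ring
    rw [harg] at h2
    linear_combination (1 - q) ^ n * h1 - h2 + hx - (1 - (1 - q) * x) * hqx

/-- `Φ_n(x) = (1-q)^(-n) ∑_i C(n,i) (-1)^i ((1-q)x;q)_i`. -/
theorem qexp2_eq_qpoch_sum {F : Type*} [Field F] (q : F) (hq : q ≠ 1) (x : F) (n : ℕ) :
    ∑ k ∈ Finset.range (n + 1), q ^ k.choose 2 * qStirling2 q n k * x ^ k =
      (1 - q)⁻¹ ^ n * ∑ i ∈ Finset.range (n + 1),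
        (n.choose i : F) * (-1 : F) ^ i * qpoch q ((1 - q) * x) i := by
  have h1q : (1 - q) ≠ 0 := sub_ne_zero.mpr (Ne.symm hq)
  rw [← key_identity q n x, inv_pow, inv_mul_cancel_left₀ (pow_ne_zero n h1q)]
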